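/- arXiv:1908.10984 — 5 statements merged into one kernel-verified Lean document; each statement's English description precedes it below -/
import Mathlib

section
/- For a compactly supported smooth vector field f on R^n and vectors ξ, η in R^n that are both orthogonal to a unit vector ω, the Radon transform of ⟨Wf, ξ⊗η⟩ on the hyperplane H(ω,p) vanishes, where (Wf)_{ij} = (1/2)(∂f_i/∂x^j − ∂f_j/∂x^i) is the Saint-Venant operator. That is, ∫_{H(ω,p)} (Wf)_{ij}(x) ξ^i η^j ds = (1/2)(⟨ω,η⟩ ∂_p ⟨f,ξ⟩^∧(ω,p) − ⟨ω,ξ⟩ ∂_p ⟨f,η⟩^∧(ω,p)) = 0 when ⟨ω,ξ⟩ = ⟨ω,η⟩ = 0. -/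
open MeasureTheory Metric Set
open scoped RealInnerProductSpace

/-- The Radon transform of `g` over the hyperplane `{x | ⟪ω, x⟫ = p}`,
computed via the parametrization `x = p • ω + y`, `y ∈ ω^⊥`. -/
noncomputable def radon {n : ℕ} (g : EuclideanSpace ℝ (Fin n) → ℝ)
    (ω : EuclideanSpace ℝ (Fin n)) (p : ℝ) : ℝ :=
  ∫ y : (ℝ ∙ ω)ᗮ, g (p • ω + (y : EuclideanSpace ℝ (Fin n)))

/-- The Saint-Venant operator of a covector field `f`:
`(Wf)_{ij} = (1/2)(∂_j f_i - ∂_i f_j)`. -/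
noncomputable def saintVenant {n : ℕ} (f : Fin n → EuclideanSpace ℝ (Fin n) → ℝ)
    (i j : Fin n) (x : EuclideanSpace ℝ (Fin n)) : ℝ :=
  (1 / 2) * (fderiv ℝ (f i) x (EuclideanSpace.single j 1) -
    fderiv ℝ (f j) x (EuclideanSpace.single i 1))

section Aux

variable {E : Type*} [NormedAddCommGroup E] [InnerProductSpace ℝ E]
  [FiniteDimensional ℝ E] [MeasurableSpace E] [BorelSpace E]

/-- The integral of a directional derivative of a `C¹` compactly supported function
with respect to an additive Haar measure vanishes. -/
lemma integral_fderiv_apply_eq_zero_aux (μ : Measure E) [μ.IsAddHaarMeasure]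
    {g : E → ℝ} (hg : ContDiff ℝ 1 g) (h2 : HasCompactSupport g) (v : E) :
    ∫ x, fderiv ℝ g x v ∂μ = 0 := by
  obtain ⟨C, hC⟩ := ContDiff.lipschitzWith_of_hasCompactSupport h2 hg one_ne_zero
  have h1 : LipschitzWith 0 (fun _ : E => (1 : ℝ)) := LipschitzWith.const _
  have key := LipschitzWith.integral_lineDeriv_mul_eq (μ := μ) h1 hC h2 (-v)
  have hlc : ∀ x : E, lineDeriv ℝ (fun _ : E => (1 : ℝ)) x (-v) = 0 := by
    intro x
    simp [lineDeriv]
  simp only [hlc, zero_mul, integral_zero, neg_neg, mul_one] at key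
  have hfd : ∀ x : E, lineDeriv ℝ g x v = fderiv ℝ g x v := fun x =>
    ((hg.differentiable one_ne_zero) x).lineDeriv_eq_fderiv
  simp only [hfd] at key
  exact key.symm

end Aux

/-- Transfer lemma: the integral over the hyperplane parametrized by `(ℝ ∙ ω)ᗮ` of a
directional derivative along a direction lying in `(ℝ ∙ ω)ᗮ` vanishes (and the integrand is
integrable). -/
lemma integrable_and_integral_hyperplane_fderiv_eq_zero {n : ℕ}
    {G : EuclideanSpace ℝ (Fin n) → ℝ} (hG : ContDiff ℝ 1 G) (h2 : HasCompactSupport G)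
    (ω : EuclideanSpace ℝ (Fin n)) (p : ℝ) {v : EuclideanSpace ℝ (Fin n)}
    (hv : v ∈ (ℝ ∙ ω)ᗮ) :
    Integrable (fun y : (ℝ ∙ ω)ᗮ => fderiv ℝ G (p • ω + (y : EuclideanSpace ℝ (Fin n))) v) ∧
      ∫ y : (ℝ ∙ ω)ᗮ, fderiv ℝ G (p • ω + (y : EuclideanSpace ℝ (Fin n))) v = 0 := by
  set V : Submodule ℝ (EuclideanSpace ℝ (Fin n)) := (ℝ ∙ ω)ᗮ with hV
  set c : EuclideanSpace ℝ (Fin n) := p • ω with hc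
  set φ : V → EuclideanSpace ℝ (Fin n) := fun y => c + (y : EuclideanSpace ℝ (Fin n)) with hφ
  have hφc : Continuous φ := continuous_const.add continuous_subtype_val
  set g : V → ℝ := fun y => G (φ y) with hg
  -- smoothness of g
  have hgc : ContDiff ℝ 1 g :=
    hG.comp (contDiff_const.add (V.subtypeL.contDiff))
  -- compact support of g
  have hKc : IsCompact (φ ⁻¹' tsupport G) := by
    apply isCompact_of_isClosed_isBounded ((isClosed_tsupport G).preimage hφc)
    obtain ⟨R, hR⟩ := h2.isBounded.subset_closedBall 0
    rw [isBounded_iff_forall_norm_le]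
    refine ⟨R + ‖c‖, fun y hy => ?_⟩
    have h1 : ‖φ y‖ ≤ R := by simpa using hR hy
    have h2 : ‖(y : EuclideanSpace ℝ (Fin n))‖ = ‖φ y - c‖ := by
      simp [hφ]
    calc ‖y‖ = ‖(y : EuclideanSpace ℝ (Fin n))‖ := rfl
    _ = ‖φ y - c‖ := h2
    _ ≤ ‖φ y‖ + ‖c‖ := norm_sub_le _ _
    _ ≤ R + ‖c‖ := by linarith
  have h2g : HasCompactSupport g := by
    apply HasCompactSupport.intro hKc
    intro y hy
    exact image_eq_zero_of_notMem_tsupport (f := G) hy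
  -- identify the derivative
  set w : V := ⟨v, hv⟩ with hw
  have hder : ∀ y : V, fderiv ℝ g y w = fderiv ℝ G (φ y) v := by
    intro y
    have hG' : HasFDerivAt G (fderiv ℝ G (φ y)) (φ y) :=
      ((hG.differentiable one_ne_zero) (φ y)).hasFDerivAt
    have hφ' : HasFDerivAt φ (V.subtypeL) y := by
      exact (V.subtypeL.hasFDerivAt (x := y)).const_add c
    have : HasFDerivAt g ((fderiv ℝ G (φ y)).comp V.subtypeL) y := hG'.comp y hφ'
    rw [this.fderiv]
    rfl
  -- integrability
  have hcont : Continuous (fun y : V => fderiv ℝ g y w) :=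
    (hgc.continuous_fderiv_apply one_ne_zero).comp (continuous_id.prodMk continuous_const)
  have hsupp : HasCompactSupport (fun y : V => fderiv ℝ g y w) := by
    apply HasCompactSupport.intro (h2g.fderiv ℝ)
    intro y hy
    have : fderiv ℝ g y = 0 := image_eq_zero_of_notMem_tsupport hy
    simp [this]
  have hint : Integrable (fun y : V => fderiv ℝ g y w) :=
    hcont.integrable_of_hasCompactSupport hsupp
  have hzero : ∫ y : V, fderiv ℝ g y w = 0 :=
    integral_fderiv_apply_eq_zero_aux volume hgc h2g w
  constructor
  · have := hint
    simpa only [hder] using this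
  · rw [← hzero]
    exact integral_congr_ae (Filter.Eventually.of_forall fun y => (hder y).symm)

/-- Every vector of `EuclideanSpace ℝ (Fin n)` is the sum of its coordinates times the
standard basis vectors. -/
lemma euclidean_repr {n : ℕ} (v : EuclideanSpace ℝ (Fin n)) :
    v = ∑ j, v j • EuclideanSpace.single j (1 : ℝ) := by
  have h := (EuclideanSpace.basisFun (Fin n) ℝ).sum_repr v
  simp only [EuclideanSpace.basisFun_repr, EuclideanSpace.basisFun_apply] at h
  exact h.symm

lemma hasCompactSupport_sum {α : Type*} [TopologicalSpace α] [T2Space α] {ι : Type*} [Fintype ι]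
    (g : ι → α → ℝ) (h : ∀ i, HasCompactSupport (g i)) :
    HasCompactSupport (fun x => ∑ i, g i x) := by
  apply HasCompactSupport.intro (isCompact_iUnion fun i => h i)
  intro x hx
  simp only [mem_iUnion, not_exists] at hx
  exact Finset.sum_eq_zero fun i _ => image_eq_zero_of_notMem_tsupport (hx i)

/-- If both ξ and η are orthogonal to ω, the Radon transform of ⟨Wf, ξ⊗η⟩ over
H(ω,p) equals the derivative expression and vanishes. -/
theorem radon_saintVenant_orthogonal_vanishes {n : ℕ}
    (f : Fin n → EuclideanSpace ℝ (Fin n) → ℝ)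
    (hf : ∀ i, ContDiff ℝ (⊤ : ℕ∞) (f i)) (hsupp : ∀ i, HasCompactSupport (f i))
    (ω ξ η : EuclideanSpace ℝ (Fin n)) (hω : ‖ω‖ = 1)
    (hξ : ⟪ω, ξ⟫ = 0) (hη : ⟪ω, η⟫ = 0) (p : ℝ) :
    radon (fun x => ∑ i, ∑ j, saintVenant f i j x * ξ i * η j) ω p =
      (1 / 2) * (⟪ω, η⟫ * deriv (fun q => radon (fun x => ∑ i, f i x * ξ i) ω q) p -
        ⟪ω, ξ⟫ * deriv (fun q => radon (fun x => ∑ i, f i x * η i) ω q) p) ∧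
    radon (fun x => ∑ i, ∑ j, saintVenant f i j x * ξ i * η j) ω p = 0 := by
  have hξmem : ξ ∈ (ℝ ∙ ω)ᗮ := (Submodule.mem_orthogonal_singleton_iff_inner_right).2 hξ
  have hηmem : η ∈ (ℝ ∙ ω)ᗮ := (Submodule.mem_orthogonal_singleton_iff_inner_right).2 hη
  let E := EuclideanSpace ℝ (Fin n)
  let Gξ : EuclideanSpace ℝ (Fin n) → ℝ := fun x => ∑ i, f i x * ξ i
  let Gη : EuclideanSpace ℝ (Fin n) → ℝ := fun x => ∑ i, f i x * η i
  have hGξc : ContDiff ℝ 1 Gξ := ContDiff.sum fun i _ =>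
    ((hf i).of_le (by simp)).mul contDiff_const
  have hGηc : ContDiff ℝ 1 Gη := ContDiff.sum fun i _ =>
    ((hf i).of_le (by simp)).mul contDiff_const
  have hGξs : HasCompactSupport Gξ :=
    hasCompactSupport_sum _ fun i => (hsupp i).mul_right
  have hGηs : HasCompactSupport Gη :=
    hasCompactSupport_sum _ fun i => (hsupp i).mul_right
  have hfd : ∀ i (x : EuclideanSpace ℝ (Fin n)), DifferentiableAt ℝ (f i) x := fun i x =>
    (hf i).differentiable (by simp) x
  -- pointwise identity
  have key : ∀ x : EuclideanSpace ℝ (Fin n), (∑ i, ∑ j, saintVenant f i j x * ξ i * η j)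
      = (1 / 2) * (fderiv ℝ Gξ x η - fderiv ℝ Gη x ξ) := by
    intro x
    have hAξ : fderiv ℝ Gξ x η
        = ∑ i, ξ i * ∑ j, η j * fderiv ℝ (f i) x (EuclideanSpace.single j 1) := by
      show fderiv ℝ (fun x => ∑ i, f i x * ξ i) x η = _
      rw [fderiv_fun_sum fun i _ => (hfd i x).mul_const _]
      rw [ContinuousLinearMap.sum_apply]
      refine Finset.sum_congr rfl fun i _ => ?_
      rw [fderiv_mul_const (hfd i x)]
      rw [ContinuousLinearMap.smul_apply]
      have : (fderiv ℝ (f i) x) η = ∑ j, η j * fderiv ℝ (f i) x (EuclideanSpace.single j 1) := by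
        conv_lhs => rw [euclidean_repr η]
        rw [map_sum]
        exact Finset.sum_congr rfl fun j _ => by rw [(fderiv ℝ (f i) x).map_smul]; rfl
      rw [this]
      simp [smul_eq_mul]
    have hAη : fderiv ℝ Gη x ξ
        = ∑ i, η i * ∑ j, ξ j * fderiv ℝ (f i) x (EuclideanSpace.single j 1) := by
      show fderiv ℝ (fun x => ∑ i, f i x * η i) x ξ = _
      rw [fderiv_fun_sum fun i _ => (hfd i x).mul_const _]
      rw [ContinuousLinearMap.sum_apply]
      refine Finset.sum_congr rfl fun i _ => ?_
      rw [fderiv_mul_const (hfd i x)]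
      rw [ContinuousLinearMap.smul_apply]
      have : (fderiv ℝ (f i) x) ξ = ∑ j, ξ j * fderiv ℝ (f i) x (EuclideanSpace.single j 1) := by
        conv_lhs => rw [euclidean_repr ξ]
        rw [map_sum]
        exact Finset.sum_congr rfl fun j _ => by rw [(fderiv ℝ (f i) x).map_smul]; rfl
      rw [this]
      simp [smul_eq_mul]
    have h1 : ∑ i, ξ i * ∑ j, η j * fderiv ℝ (f i) x (EuclideanSpace.single j 1)
        = ∑ i, ∑ j, ξ i * (η j * fderiv ℝ (f i) x (EuclideanSpace.single j 1)) := by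
      simp_rw [Finset.mul_sum]
    have h2 : ∑ i, η i * ∑ j, ξ j * fderiv ℝ (f i) x (EuclideanSpace.single j 1)
        = ∑ i, ∑ j, η j * (ξ i * fderiv ℝ (f j) x (EuclideanSpace.single i 1)) := by
      simp_rw [Finset.mul_sum]
      exact Finset.sum_comm
    rw [hAξ, hAη, h1, h2, ← Finset.sum_sub_distrib, Finset.mul_sum]
    refine Finset.sum_congr rfl fun i _ => ?_
    rw [← Finset.sum_sub_distrib, Finset.mul_sum]
    refine Finset.sum_congr rfl fun j _ => ?_
    simp only [saintVenant]
    ring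
  -- vanishing of the radon transform
  obtain ⟨hintξ, hzeroξ⟩ :=
    integrable_and_integral_hyperplane_fderiv_eq_zero hGξc hGξs ω p hηmem
  obtain ⟨hintη, hzeroη⟩ :=
    integrable_and_integral_hyperplane_fderiv_eq_zero hGηc hGηs ω p hξmem
  have hmain : radon (fun x => ∑ i, ∑ j, saintVenant f i j x * ξ i * η j) ω p = 0 := by
    unfold radon
    have : (fun y : (ℝ ∙ ω)ᗮ => ∑ i, ∑ j,
        saintVenant f i j (p • ω + (y : EuclideanSpace ℝ (Fin n))) * ξ i * η j)
        = fun y : (ℝ ∙ ω)ᗮ => (1 / 2) * (fderiv ℝ Gξ (p • ω + (y : EuclideanSpace ℝ (Fin n))) η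
            - fderiv ℝ Gη (p • ω + (y : EuclideanSpace ℝ (Fin n))) ξ) := by
      funext y
      exact key _
    rw [this]
    rw [integral_const_mul]
    rw [integral_sub hintξ hintη]
    rw [hzeroξ, hzeroη]
    ring
  refine ⟨?_, hmain⟩
  rw [hmain, hξ, hη]
  ring
end

section
/- Let f be a compactly supported smooth covector field on R^n, let ω be a unit vector, and let ξ ∈ R^n be orthogonal to ω. Then the Radon transform of x ↦ (Wf)_{ij}(x) ξ^i ω^j equals (1/2) ∂_p ⟨f,ξ⟩^∧(ω,p). -/
open MeasureTheory Metric Set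
open scoped RealInnerProductSpace

/- ### Auxiliary lemmas -/

lemma clm_apply_eq_sum' {n : ℕ} (L : EuclideanSpace ℝ (Fin n) →L[ℝ] ℝ)
    (v : EuclideanSpace ℝ (Fin n)) :
    L v = ∑ j, v j * L (EuclideanSpace.single j 1) := by
  have hv : v = ∑ j, v j • EuclideanSpace.single j (1:ℝ) := by
    have h := (EuclideanSpace.basisFun (Fin n) ℝ).sum_repr v
    simpa [EuclideanSpace.basisFun_apply, EuclideanSpace.basisFun_repr] using h.symm
  conv_lhs => rw [hv]
  simp [smul_eq_mul]

lemma hcs_sum' {n : ℕ} {α : Type*} [TopologicalSpace α] (F : Fin n → α → ℝ)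
    (h : ∀ i, HasCompactSupport (F i)) :
    HasCompactSupport (fun x => ∑ i, F i x) := by
  classical
  have hsub : Function.support (fun x => ∑ i, F i x) ⊆ ⋃ i, tsupport (F i) := by
    intro x hx
    simp only [Function.mem_support] at hx
    by_contra hmem
    simp only [mem_iUnion, not_exists] at hmem
    exact hx (Finset.sum_eq_zero fun i _ =>
      image_eq_zero_of_notMem_tsupport (hmem i))
  have hK : IsCompact (⋃ i, tsupport (F i)) := isCompact_iUnion fun i => h i
  exact IsCompact.of_isClosed_subset hK (isClosed_closure)
    (closure_minimal hsub (isClosed_iUnion_of_finite fun i => isClosed_tsupport _))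

section shift
variable {n : ℕ} (ω : EuclideanSpace ℝ (Fin n))

lemma shift_contDiff' {g : EuclideanSpace ℝ (Fin n) → ℝ} (hg : ContDiff ℝ (⊤ : ℕ∞) g)
    (c : EuclideanSpace ℝ (Fin n)) :
    ContDiff ℝ (⊤ : ℕ∞) (fun y : (ℝ ∙ ω)ᗮ => g (c + y)) :=
  hg.comp (contDiff_const.add ((ℝ ∙ ω)ᗮ.subtypeL.contDiff))

lemma shift_hcs' {g : EuclideanSpace ℝ (Fin n) → ℝ} (hsupp : HasCompactSupport g)
    (c : EuclideanSpace ℝ (Fin n)) :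
    HasCompactSupport (fun y : (ℝ ∙ ω)ᗮ => g (c + y)) := by
  obtain ⟨M, hM⟩ := hsupp.isBounded.subset_closedBall 0
  have hsub : Function.support (fun y : (ℝ ∙ ω)ᗮ => g (c + y)) ⊆
      closedBall (0 : (ℝ ∙ ω)ᗮ) (M + ‖c‖) := by
    intro y hy
    have h1 : c + (y : EuclideanSpace ℝ (Fin n)) ∈ tsupport g :=
      subset_closure hy
    have h2 := hM h1
    simp only [mem_closedBall, dist_zero_right] at h2 ⊢
    calc ‖y‖ = ‖(c + (y : EuclideanSpace ℝ (Fin n))) - c‖ := by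
            rw [add_sub_cancel_left]; rfl
      _ ≤ ‖c + (y : EuclideanSpace ℝ (Fin n))‖ + ‖c‖ := norm_sub_le _ _
      _ ≤ M + ‖c‖ := by linarith
  exact IsCompact.of_isClosed_subset (isCompact_closedBall _ _) isClosed_closure
    (closure_minimal hsub isClosed_closedBall)

lemma shift_integrable' {g : EuclideanSpace ℝ (Fin n) → ℝ} (hg : Continuous g)
    (hsupp : HasCompactSupport g) (c : EuclideanSpace ℝ (Fin n)) :
    Integrable (fun y : (ℝ ∙ ω)ᗮ => g (c + y)) :=
  (hg.comp (continuous_const.add continuous_subtype_val)).integrable_of_hasCompactSupport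
    (shift_hcs' ω hsupp c)

lemma shift_hasFDerivAt' {g : EuclideanSpace ℝ (Fin n) → ℝ} (hg : ContDiff ℝ (⊤ : ℕ∞) g)
    (c : EuclideanSpace ℝ (Fin n)) (y : (ℝ ∙ ω)ᗮ) :
    HasFDerivAt (fun y : (ℝ ∙ ω)ᗮ => g (c + y))
      ((fderiv ℝ g (c + y)).comp (ℝ ∙ ω)ᗮ.subtypeL) y := by
  have h1 : HasFDerivAt (fun y : (ℝ ∙ ω)ᗮ => c + (y : EuclideanSpace ℝ (Fin n)))
      ((ℝ ∙ ω)ᗮ.subtypeL) y := ((ℝ ∙ ω)ᗮ.subtypeL.hasFDerivAt).const_add c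
  exact ((hg.differentiable (by simp) _).hasFDerivAt).comp y h1

/-- The integral over the hyperplane of a tangential derivative vanishes. -/
lemma integral_shift_fderiv_tangent_eq_zero' {g : EuclideanSpace ℝ (Fin n) → ℝ}
    (hg : ContDiff ℝ (⊤ : ℕ∞) g) (hsupp : HasCompactSupport g) (c : EuclideanSpace ℝ (Fin n))
    {v : EuclideanSpace ℝ (Fin n)} (hv : ⟪ω, v⟫ = 0) :
    ∫ y : (ℝ ∙ ω)ᗮ, fderiv ℝ g (c + y) v = 0 := by
  set h : (ℝ ∙ ω)ᗮ → ℝ := fun y => g (c + y) with hh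
  have hcd : ContDiff ℝ (⊤ : ℕ∞) h := shift_contDiff' ω hg c
  have hcs : HasCompactSupport h := shift_hcs' ω hsupp c
  have hdiff : Differentiable ℝ h := hcd.differentiable (by simp)
  set v' : (ℝ ∙ ω)ᗮ := ⟨v, Submodule.mem_orthogonal_singleton_iff_inner_right.2 hv⟩ with hv'
  have hfd : ∀ y, fderiv ℝ h y v' = fderiv ℝ g (c + y) v := fun y => by
    rw [(shift_hasFDerivAt' ω hg c y).fderiv]; rfl
  have hint : Integrable (fun y : (ℝ ∙ ω)ᗮ => fderiv ℝ h y v') :=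
    (((ContinuousLinearMap.apply ℝ ℝ v').continuous.comp
      (hcd.continuous_fderiv (by simp)))).integrable_of_hasCompactSupport
      (hcs.fderiv_apply ℝ v')
  have key : ∫ y : (ℝ ∙ ω)ᗮ, (1:ℝ) * fderiv ℝ h y v' =
      - ∫ y : (ℝ ∙ ω)ᗮ, fderiv ℝ (fun _ : (ℝ ∙ ω)ᗮ => (1:ℝ)) y v' * h y := by
    apply integral_mul_fderiv_eq_neg_fderiv_mul_of_integrable
    · have : (fun y : (ℝ ∙ ω)ᗮ => fderiv ℝ (fun _ : (ℝ ∙ ω)ᗮ => (1:ℝ)) y v' * h y)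
          = fun _ => 0 := by
        ext y; simp [fderiv_const]
      rw [this]; exact integrable_zero _ _ _
    · simpa using hint
    · simpa using (hcd.continuous.integrable_of_hasCompactSupport hcs)
    · exact fun x _ => differentiableAt_const _
    · exact fun x _ => hdiff x
  have hzero : ∫ y : (ℝ ∙ ω)ᗮ, fderiv ℝ h y v' = 0 := by
    simpa [fderiv_const] using key
  rw [← hzero]
  exact integral_congr_ae (Filter.Eventually.of_forall fun y => (hfd y).symm)

/-- Differentiation of the Radon transform in the affine parameter. -/
lemma hasDerivAt_integral_shift' {g : EuclideanSpace ℝ (Fin n) → ℝ}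
    (hg : ContDiff ℝ (⊤ : ℕ∞) g) (hsupp : HasCompactSupport g) (hω : ‖ω‖ = 1) (p : ℝ) :
    HasDerivAt (fun q => ∫ y : (ℝ ∙ ω)ᗮ, g (q • ω + y))
      (∫ y : (ℝ ∙ ω)ᗮ, fderiv ℝ g (p • ω + y) ω) p := by
  obtain ⟨C, hC⟩ := ((hg.continuous_fderiv (by simp))).bounded_above_of_compact_support
    (hsupp.fderiv ℝ)
  have hC0 : 0 ≤ C := le_trans (norm_nonneg _) (hC 0)
  obtain ⟨M, hM⟩ := hsupp.isBounded.subset_closedBall 0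
  set R : ℝ := M + |p| + 1 with hR
  set bound : (ℝ ∙ ω)ᗮ → ℝ := (closedBall (0 : (ℝ ∙ ω)ᗮ) R).indicator (fun _ => C) with hb
  have hcont : ∀ q : ℝ, Continuous (fun y : (ℝ ∙ ω)ᗮ => g (q • ω + y)) := fun q =>
    hg.continuous.comp (continuous_const.add continuous_subtype_val)
  have hderiv : ∀ (y : (ℝ ∙ ω)ᗮ) (q : ℝ),
      HasDerivAt (fun q : ℝ => g (q • ω + y)) (fderiv ℝ g (q • ω + y) ω) q := by
    intro y q
    have h1 : HasDerivAt (fun q : ℝ => q • ω + (y : EuclideanSpace ℝ (Fin n))) ω q := by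
      simpa using ((hasDerivAt_id q).smul_const ω).add_const (y : EuclideanSpace ℝ (Fin n))
    exact ((hg.differentiable (by simp) _).hasFDerivAt).comp_hasDerivAt q h1
  have hzero : ∀ (y : (ℝ ∙ ω)ᗮ) (q : ℝ), q ∈ ball p 1 → ¬ ‖y‖ ≤ R →
      fderiv ℝ g (q • ω + y) = 0 := by
    intro y q hq hy
    push_neg at hy
    have hmem : q • ω + (y : EuclideanSpace ℝ (Fin n)) ∉ tsupport g := by
      intro hmemK
      have h2 := hM hmemK
      simp only [mem_closedBall, dist_zero_right] at h2
      have hqn : ‖q • ω‖ ≤ |p| + 1 := by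
        rw [norm_smul, hω, mul_one, Real.norm_eq_abs]
        have := mem_ball_iff_norm.1 hq
        have := abs_sub_abs_le_abs_sub q p
        simp only [Real.norm_eq_abs] at *
        linarith
      have : ‖y‖ ≤ ‖q • ω + (y : EuclideanSpace ℝ (Fin n))‖ + ‖q • ω‖ := by
        have := norm_sub_le (q • ω + (y : EuclideanSpace ℝ (Fin n))) (q • ω)
        simpa [add_sub_cancel_left] using this
      linarith
    by_contra hne
    exact hmem (support_fderiv_subset ℝ (Function.mem_support.2 hne))
  have := (hasDerivAt_integral_of_dominated_loc_of_deriv_le (s := ball p 1)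
    (F := fun q (y : (ℝ ∙ ω)ᗮ) => g (q • ω + y))
    (F' := fun q (y : (ℝ ∙ ω)ᗮ) => fderiv ℝ g (q • ω + y) ω)
    (bound := bound) (ball_mem_nhds p one_pos)
    (Filter.Eventually.of_forall fun q => (hcont q).aestronglyMeasurable)
    (shift_integrable' ω hg.continuous hsupp (p • ω))
    (((ContinuousLinearMap.apply ℝ ℝ ω).continuous.comp
      ((hg.continuous_fderiv (by simp)).comp
        (continuous_const.add continuous_subtype_val))).aestronglyMeasurable)
    ?_ ?_ ?_)
  · exact this.2
  · refine Filter.Eventually.of_forall fun y => fun q hq => ?_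
    show ‖fderiv ℝ g (q • ω + y) ω‖ ≤ bound y
    by_cases hy : ‖y‖ ≤ R
    · have hbv : bound y = C := by
        rw [hb, indicator_of_mem (by simpa [mem_closedBall, dist_zero_right] using hy)]
      rw [hbv]
      calc ‖fderiv ℝ g (q • ω + y) ω‖ ≤ ‖fderiv ℝ g (q • ω + y)‖ * ‖ω‖ :=
            ContinuousLinearMap.le_opNorm _ _
        _ ≤ C := by rw [hω, mul_one]; exact hC _
    · rw [hzero y q hq hy]
      simpa using indicator_nonneg (fun _ _ => hC0) y
  · rw [hb, integrable_indicator_iff measurableSet_closedBall]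
    exact integrableOn_const measure_closedBall_lt_top.ne
  · exact Filter.Eventually.of_forall fun y q _ => hderiv y q

end shift

lemma pointwise_saintVenant_eq {n : ℕ} (f : Fin n → EuclideanSpace ℝ (Fin n) → ℝ)
    (hf : ∀ i, ContDiff ℝ (⊤ : ℕ∞) (f i)) (ω ξ : EuclideanSpace ℝ (Fin n))
    (x : EuclideanSpace ℝ (Fin n)) :
    ∑ i, ∑ j, saintVenant f i j x * ξ i * ω j =
      (1/2) * (fderiv ℝ (fun x => ∑ i, f i x * ξ i) x ω
              - fderiv ℝ (fun x => ∑ j, f j x * ω j) x ξ) := by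
  have hdiff : ∀ i (x : EuclideanSpace ℝ (Fin n)), DifferentiableAt ℝ (f i) x :=
    fun i x => (hf i).differentiable (by simp) x
  have hgξ : fderiv ℝ (fun x => ∑ i, f i x * ξ i) x = ∑ i, ξ i • fderiv ℝ (f i) x := by
    rw [fderiv_fun_sum (fun i _ => ((hdiff i x).mul_const (ξ i)))]
    exact Finset.sum_congr rfl fun i _ => fderiv_mul_const (hdiff i x) (ξ i)
  have hgω : fderiv ℝ (fun x => ∑ j, f j x * ω j) x = ∑ j, ω j • fderiv ℝ (f j) x := by
    rw [fderiv_fun_sum (fun j _ => ((hdiff j x).mul_const (ω j)))]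
    exact Finset.sum_congr rfl fun j _ => fderiv_mul_const (hdiff j x) (ω j)
  rw [hgξ, hgω]
  simp only [ContinuousLinearMap.coe_sum', Finset.sum_apply, ContinuousLinearMap.coe_smul',
    Pi.smul_apply, smul_eq_mul]
  have e1 : (∑ i, ξ i * fderiv ℝ (f i) x ω) =
      ∑ i, ∑ j, ξ i * (ω j * fderiv ℝ (f i) x (EuclideanSpace.single j 1)) :=
    Finset.sum_congr rfl fun i _ => by rw [clm_apply_eq_sum' _ ω, Finset.mul_sum]
  have e2 : (∑ j, ω j * fderiv ℝ (f j) x ξ) =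
      ∑ i, ∑ j, ω j * (ξ i * fderiv ℝ (f j) x (EuclideanSpace.single i 1)) := by
    rw [Finset.sum_comm]
    exact Finset.sum_congr rfl fun j _ => by rw [clm_apply_eq_sum' _ ξ, Finset.mul_sum]
  rw [e1, e2, mul_sub, Finset.mul_sum, Finset.mul_sum, ← Finset.sum_sub_distrib]
  refine Finset.sum_congr rfl fun i _ => ?_
  rw [Finset.mul_sum, Finset.mul_sum, ← Finset.sum_sub_distrib]
  refine Finset.sum_congr rfl fun j _ => ?_
  simp only [saintVenant]
  ring

/-- For ξ orthogonal to ω, the Radon transform of ⟨Wf, ξ⊗ω⟩ equals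
. -/
theorem radon_saintVenant_tangent_normal {n : ℕ}
    (f : Fin n → EuclideanSpace ℝ (Fin n) → ℝ)
    (hf : ∀ i, ContDiff ℝ (⊤ : ℕ∞) (f i)) (hsupp : ∀ i, HasCompactSupport (f i))
    (ω ξ : EuclideanSpace ℝ (Fin n)) (hω : ‖ω‖ = 1) (hξ : ⟪ω, ξ⟫ = 0) (p : ℝ) :
    radon (fun x => ∑ i, ∑ j, saintVenant f i j x * ξ i * ω j) ω p =
      (1 / 2) * deriv (fun q => radon (fun x => ∑ i, f i x * ξ i) ω q) p := by
  classical
  set gξ : EuclideanSpace ℝ (Fin n) → ℝ := fun x => ∑ i, f i x * ξ i with hgξdef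
  set gω : EuclideanSpace ℝ (Fin n) → ℝ := fun x => ∑ j, f j x * ω j with hgωdef
  have hgξ_cd : ContDiff ℝ (⊤ : ℕ∞) gξ := ContDiff.sum fun i _ => (hf i).mul contDiff_const
  have hgω_cd : ContDiff ℝ (⊤ : ℕ∞) gω := ContDiff.sum fun j _ => (hf j).mul contDiff_const
  have hgξ_cs : HasCompactSupport gξ :=
    hcs_sum' _ fun i => ((hsupp i).mul_right : HasCompactSupport fun x => f i x * ξ i)
  have hgω_cs : HasCompactSupport gω :=
    hcs_sum' _ fun j => ((hsupp j).mul_right : HasCompactSupport fun x => f j x * ω j)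
  have hrw : radon (fun x => ∑ i, ∑ j, saintVenant f i j x * ξ i * ω j) ω p =
      ∫ y : (ℝ ∙ ω)ᗮ, (1/2) * (fderiv ℝ gξ (p • ω + y) ω - fderiv ℝ gω (p • ω + y) ξ) := by
    rw [radon]
    exact integral_congr_ae (Filter.Eventually.of_forall fun y =>
      pointwise_saintVenant_eq f hf ω ξ _)
  have int1 : Integrable (fun y : (ℝ ∙ ω)ᗮ => fderiv ℝ gξ (p • ω + y) ω) :=
    shift_integrable' ω
      ((ContinuousLinearMap.apply ℝ ℝ ω).continuous.comp (hgξ_cd.continuous_fderiv (by simp)))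
      (hgξ_cs.fderiv_apply ℝ ω) (p • ω)
  have int2 : Integrable (fun y : (ℝ ∙ ω)ᗮ => fderiv ℝ gω (p • ω + y) ξ) :=
    shift_integrable' ω
      ((ContinuousLinearMap.apply ℝ ℝ ξ).continuous.comp (hgω_cd.continuous_fderiv (by simp)))
      (hgω_cs.fderiv_apply ℝ ξ) (p • ω)
  rw [hrw, integral_const_mul, integral_sub int1 int2,
    integral_shift_fderiv_tangent_eq_zero' ω hgω_cd hgω_cs (p • ω) hξ, sub_zero]
  have hD := hasDerivAt_integral_shift' ω hgξ_cd hgξ_cs hω p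
  have hde : deriv (fun q => radon gξ ω q) p =
      ∫ y : (ℝ ∙ ω)ᗮ, fderiv ℝ gξ (p • ω + y) ω := by
    have hfun : (fun q => radon gξ ω q) =
        fun q => ∫ y : (ℝ ∙ ω)ᗮ, gξ (q • ω + y) := rfl
    rw [hfun, hD.deriv]
  rw [hde]
end

section
/- Let f be a compactly supported continuous covector field on R^n (n ≥ 3) supported in a bounded domain B, let γ_0 ∈ R^n lie outside B, and suppose the ray {γ_0 + tξ : t ≥ 0} intersects the hyperplane H(ω,p) ∋ γ_0 only in directions ξ orthogonal to ω. Then integrating the divergent-beam ray transform D_γ f(γ_0,ξ) = ∫_0^∞ f_j(γ_0+tξ)ξ^j dt over the unit sphere S(ω) = {ξ ∈ S^{n-1} : ⟨ξ,ω⟩ = 0} yields ∫_{S(ω)} D_γ f(γ_0,ξ) dω(ξ) = ∫_{H(ω,p)} ⟨f(y), y−γ_0⟩ / |y−γ_0|^{n-1} dy. -/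
open MeasureTheory Metric Set
open scoped RealInnerProductSpace

set_option maxHeartbeats 1000000 in
set_option synthInstance.maxHeartbeats 400000 in
/-- Integrating the divergent-beam ray transform of a covector field `f` from a source
`γ₀` over the unit sphere `S(ω)` of directions orthogonal to `ω` equals the weighted
integral of `⟨f(y), y - γ₀⟩ / |y - γ₀|^(n-1)` over the hyperplane through `γ₀` with
normal `ω` (parametrized as `y = γ₀ + w`, `w ∈ ω^⊥`). -/
theorem integral_ray_transform_over_subsphere {n : ℕ} (hn : 3 ≤ n)
    (B : Set (EuclideanSpace ℝ (Fin n))) (hB : Bornology.IsBounded B)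
    (f : Fin n → EuclideanSpace ℝ (Fin n) → ℝ)
    (hf : ∀ i, Continuous (f i)) (hsupp : ∀ i, HasCompactSupport (f i))
    (hsuppB : ∀ i, tsupport (f i) ⊆ B)
    (γ₀ ω : EuclideanSpace ℝ (Fin n)) (hω : ‖ω‖ = 1) (hγ₀ : γ₀ ∉ B) :
    (∫ ξ : sphere (0 : (ℝ ∙ ω)ᗮ) 1,
        (∫ t in Ioi (0 : ℝ),
          ∑ i, f i (γ₀ + t • ((ξ : (ℝ ∙ ω)ᗮ) : EuclideanSpace ℝ (Fin n))) *
            ((ξ : (ℝ ∙ ω)ᗮ) : EuclideanSpace ℝ (Fin n)) i)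
        ∂(volume.toSphere)) =
      ∫ w : (ℝ ∙ ω)ᗮ,
        (∑ i, f i (γ₀ + (w : EuclideanSpace ℝ (Fin n))) *
          (w : EuclideanSpace ℝ (Fin n)) i) / ‖w‖ ^ (n - 1) := by
  classical
  have hω0 : ω ≠ 0 := by
    intro h; rw [h, norm_zero] at hω; exact one_ne_zero hω.symm
  set E : Submodule ℝ (EuclideanSpace ℝ (Fin n)) := (ℝ ∙ ω)ᗮ with hE
  have hdim : Module.finrank ℝ E = n - 1 := by
    have h1 : Module.finrank ℝ (ℝ ∙ ω : Submodule ℝ (EuclideanSpace ℝ (Fin n))) = 1 :=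
      finrank_span_singleton hω0
    have h2 := Submodule.finrank_add_finrank_orthogonal
      (K := (ℝ ∙ ω : Submodule ℝ (EuclideanSpace ℝ (Fin n))))
    rw [h1, finrank_euclideanSpace_fin, ← hE] at h2
    omega
  haveI : Nontrivial E := Module.nontrivial_of_finrank_pos (R := ℝ)
    (by rw [hdim]; omega)
  -- `f` vanishes near `γ₀`
  obtain ⟨ε, hε, hball⟩ : ∃ ε > 0, ∀ i, ∀ x ∈ Metric.ball γ₀ ε, f i x = 0 := by
    have hopen : IsOpen (⋂ i, (tsupport (f i))ᶜ) :=
      isOpen_iInter_of_finite fun i => (isClosed_tsupport _).isOpen_compl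
    have hmem : γ₀ ∈ ⋂ i, (tsupport (f i))ᶜ :=
      mem_iInter.2 fun i hxi => hγ₀ (hsuppB i hxi)
    obtain ⟨ε, hε, hsub⟩ := Metric.isOpen_iff.1 hopen γ₀ hmem
    exact ⟨ε, hε, fun i x hx =>
      image_eq_zero_of_notMem_tsupport (mem_iInter.1 (hsub hx) i)⟩
  obtain ⟨R, hR⟩ := hB.subset_closedBall (0 : EuclideanSpace ℝ (Fin n))
  set F : E → ℝ := fun w =>
    (∑ i, f i (γ₀ + (w : EuclideanSpace ℝ (Fin n))) *
      (w : EuclideanSpace ℝ (Fin n)) i) / ‖w‖ ^ (n - 1) with hFdef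
  have hzero : ∀ w : E, ∀ i, ‖w‖ < ε → f i (γ₀ + (w : EuclideanSpace ℝ (Fin n))) = 0 := by
    intro w i hw
    refine hball i _ ?_
    rw [Metric.mem_ball, dist_eq_norm, add_sub_cancel_left]
    exact hw
  have hSumCont : Continuous fun w : E =>
      ∑ i, f i (γ₀ + (w : EuclideanSpace ℝ (Fin n))) * (w : EuclideanSpace ℝ (Fin n)) i := by
    refine continuous_finset_sum _ fun i _ => ?_
    exact ((hf i).comp (continuous_const.add continuous_subtype_val)).mul
      ((continuous_apply i).comp (by fun_prop))
  have hFcont : Continuous F := by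
    rw [continuous_iff_continuousAt]
    intro w
    rcases eq_or_ne w 0 with rfl | hw
    · have hnull : ∀ᶠ v : E in nhds 0, F v = 0 := by
        filter_upwards [Metric.ball_mem_nhds (0 : E) hε] with v hv
        have hv' : ‖v‖ < ε := by simpa [dist_eq_norm] using hv
        simp [hFdef, hzero v _ hv']
      exact continuousAt_const.congr (hnull.mono fun v hv => hv.symm)
    · exact hSumCont.continuousAt.div
        ((continuous_norm.pow _).continuousAt)
        (pow_ne_zero _ (norm_ne_zero_iff.2 hw))
  have hFsupp : HasCompactSupport F := by
    refine HasCompactSupport.intro (isCompact_closedBall (0 : E) (R + ‖γ₀‖)) ?_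
    intro w hw
    have hz : ∀ i, f i (γ₀ + (w : EuclideanSpace ℝ (Fin n))) = 0 := by
      intro i
      by_contra h
      have hmem : γ₀ + (w : EuclideanSpace ℝ (Fin n)) ∈ B :=
        hsuppB i (subset_tsupport _ h)
      have h1 : ‖γ₀ + (w : EuclideanSpace ℝ (Fin n))‖ ≤ R := by
        simpa [Metric.mem_closedBall, dist_eq_norm] using hR hmem
      have h2 : ‖w‖ ≤ R + ‖γ₀‖ := by
        calc ‖w‖ = ‖(w : EuclideanSpace ℝ (Fin n))‖ := rfl
          _ = ‖(γ₀ + (w : EuclideanSpace ℝ (Fin n))) - γ₀‖ := by rw [add_sub_cancel_left]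
          _ ≤ ‖γ₀ + (w : EuclideanSpace ℝ (Fin n))‖ + ‖γ₀‖ := norm_sub_le _ _
          _ ≤ R + ‖γ₀‖ := by linarith
      exact hw (by simpa [Metric.mem_closedBall, dist_eq_norm] using h2)
    simp [hFdef, hz]
  have hFint : Integrable F (volume : Measure E) :=
    hFcont.integrable_of_hasCompactSupport hFsupp
  -- move to polar coordinates
  set G : sphere (0 : E) 1 × Ioi (0 : ℝ) → ℝ := fun p =>
    F (((homeomorphUnitSphereProd E).symm p : ({0}ᶜ : Set E)) : E) with hGdef
  have hGcomp : (fun x : ({0}ᶜ : Set E) => G (homeomorphUnitSphereProd E x))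
      = fun x : ({0}ᶜ : Set E) => F x.1 := by
    funext x
    have hx : (x : E) ≠ 0 := x.2
    simp only [hGdef, homeomorphUnitSphereProd_symm_apply_coe,
      homeomorphUnitSphereProd_apply_snd_coe, homeomorphUnitSphereProd_apply_fst_coe]
    rw [smul_inv_smul₀ (norm_ne_zero_iff.2 hx)]
  have stepA : ∫ w : E, F w
      = ∫ p, G p ∂((volume : Measure E).toSphere.prod
          (Measure.volumeIoiPow (Module.finrank ℝ E - 1))) := by
    rw [← (volume : Measure E).measurePreserving_homeomorphUnitSphereProd.integral_comp
      (Homeomorph.measurableEmbedding _) G]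
    rw [hGcomp, integral_subtype_comap (measurableSet_singleton (0:E)).compl F,
      restrict_compl_singleton]
  have hGint : Integrable G ((volume : Measure E).toSphere.prod
      (Measure.volumeIoiPow (Module.finrank ℝ E - 1))) := by
    have h0 : Integrable F ((volume : Measure E).restrict {(0:E)}ᶜ) := hFint.restrict
    rw [← map_comap_subtype_coe (measurableSet_singleton (0:E)).compl] at h0
    have h1 := (MeasurableEmbedding.subtype_coe
      (measurableSet_singleton (0:E)).compl).integrable_map_iff.mp h0
    rw [← (volume : Measure E).measurePreserving_homeomorphUnitSphereProd.integrable_comp_emb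
      (Homeomorph.measurableEmbedding _)]
    have heq : G ∘ (homeomorphUnitSphereProd E) = F ∘ Subtype.val := by
      funext x
      have hx : (x : E) ≠ 0 := x.2
      simp only [Function.comp_apply, hGdef, homeomorphUnitSphereProd_symm_apply_coe,
        homeomorphUnitSphereProd_apply_snd_coe, homeomorphUnitSphereProd_apply_fst_coe]
      rw [smul_inv_smul₀ (norm_ne_zero_iff.2 hx)]
    rw [heq]
    exact h1
  have hd2 : Module.finrank ℝ E - 1 = n - 2 := by rw [hdim]; omega
  rw [hd2] at stepA hGint
  have stepB : (∫ p, G p ∂((volume : Measure E).toSphere.prod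
        (Measure.volumeIoiPow (n - 2))))
      = ∫ ξ : sphere (0 : E) 1, (∫ t : Ioi (0 : ℝ), G (ξ, t)
          ∂(Measure.volumeIoiPow (n - 2))) ∂(volume : Measure E).toSphere :=
    integral_prod G hGint
  have stepC : ∀ ξ : sphere (0 : E) 1,
      (∫ t : Ioi (0 : ℝ), G (ξ, t) ∂(Measure.volumeIoiPow (n - 2)))
        = ∫ t in Ioi (0 : ℝ),
            ∑ i, f i (γ₀ + t • (((ξ : E) : EuclideanSpace ℝ (Fin n)))) *
              (((ξ : E) : EuclideanSpace ℝ (Fin n))) i := by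
    intro ξ
    have hξ : ‖(ξ : E)‖ = 1 := mem_sphere_zero_iff_norm.1 ξ.2
    have hGval : (fun t : Ioi (0 : ℝ) => G (ξ, t))
        = fun t : Ioi (0 : ℝ) => F (t.1 • (ξ : E)) := by
      funext t
      simp only [hGdef, homeomorphUnitSphereProd_symm_apply_coe]
    simp only [Measure.volumeIoiPow, ENNReal.ofReal]
    rw [integral_withDensity_eq_integral_smul
      ((measurable_subtype_coe.pow_const _).real_toNNReal)]
    have heq2 : (fun t : Ioi (0 : ℝ) => Real.toNNReal (t.1 ^ (n - 2)) • G (ξ, t))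
        = fun t : Ioi (0 : ℝ) =>
            (fun s : ℝ => Real.toNNReal (s ^ (n - 2)) • F (s • (ξ : E))) t.1 := by
      funext t
      simp only [hGdef, homeomorphUnitSphereProd_symm_apply_coe]
    rw [heq2, integral_subtype_comap measurableSet_Ioi
      (fun s : ℝ => Real.toNNReal (s ^ (n - 2)) • F (s • (ξ : E)))]
    refine setIntegral_congr_fun measurableSet_Ioi fun t ht => ?_
    have ht0 : (t : ℝ) ≠ 0 := ne_of_gt ht
    have hnorm : ‖t • (ξ : E)‖ = t := by
      rw [norm_smul, hξ, mul_one, Real.norm_eq_abs, abs_of_pos ht]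
    have hcoe : ((t • (ξ : E) : E) : EuclideanSpace ℝ (Fin n))
        = t • ((ξ : E) : EuclideanSpace ℝ (Fin n)) := rfl
    rw [NNReal.smul_def, Real.coe_toNNReal _ (pow_nonneg (le_of_lt ht) _)]
    rw [hFdef]
    simp only [hcoe, hnorm]
    have hsum : ∑ i, f i (γ₀ + t • ((ξ : E) : EuclideanSpace ℝ (Fin n))) *
          (t • ((ξ : E) : EuclideanSpace ℝ (Fin n))) i
        = t * ∑ i, f i (γ₀ + t • ((ξ : E) : EuclideanSpace ℝ (Fin n))) *
            ((ξ : E) : EuclideanSpace ℝ (Fin n)) i := by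
      rw [Finset.mul_sum]
      refine Finset.sum_congr rfl fun i _ => ?_
      have : (t • ((ξ : E) : EuclideanSpace ℝ (Fin n))) i
          = t * ((ξ : E) : EuclideanSpace ℝ (Fin n)) i := rfl
      rw [this]; ring
    rw [hsum]
    set S := ∑ i, f i (γ₀ + t • ((ξ : E) : EuclideanSpace ℝ (Fin n))) *
        ((ξ : E) : EuclideanSpace ℝ (Fin n)) i
    have hpow : (t : ℝ) ^ (n - 2) * t = t ^ (n - 1) := by
      rw [← pow_succ]; congr 1; omega
    calc t ^ (n - 2) * (t * S / t ^ (n - 1))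
        = (t ^ (n - 2) * t) * S / t ^ (n - 1) := by ring
      _ = t ^ (n - 1) * S / t ^ (n - 1) := by rw [hpow]
      _ = S := by
          rw [mul_comm, mul_div_assoc, div_self (pow_ne_zero _ ht0), mul_one]
  calc (∫ ξ : sphere (0 : E) 1,
        (∫ t in Ioi (0 : ℝ),
          ∑ i, f i (γ₀ + t • (((ξ : E) : EuclideanSpace ℝ (Fin n)))) *
            (((ξ : E) : EuclideanSpace ℝ (Fin n))) i)
        ∂(volume : Measure E).toSphere)
      = ∫ ξ : sphere (0 : E) 1, (∫ t : Ioi (0 : ℝ), G (ξ, t)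
          ∂(Measure.volumeIoiPow (n - 2))) ∂(volume : Measure E).toSphere := by
        refine integral_congr_ae (Filter.EventuallyEq.of_eq (funext fun ξ => ?_))
        exact (stepC ξ).symm
    _ = ∫ p, G p ∂((volume : Measure E).toSphere.prod
          (Measure.volumeIoiPow (n - 2))) := stepB.symm
    _ = ∫ w : E, F w := stepA.symm
end

section
/- Let f be a smooth compactly supported covector field on R^n and ω a unit vector. Fix ξ, η ∈ R^n and decompose ξ = ξ_1 + ξ_2, η = η_1 + η_2 where ξ_1, η_1 are orthogonal to ω and ξ_2, η_2 are parallel to ω. Then the Radon transform of ⟨Wf, ξ⊗η⟩ over H(ω,p) equals ⟨η,ω⟩ (⟨Wf, ξ_1⊗ω⟩)^∧(ω,p) − ⟨ξ,ω⟩ (⟨Wf, η_1⊗ω⟩)^∧(ω,p). -/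
open MeasureTheory Metric Set
open scoped RealInnerProductSpace

set_option maxHeartbeats 1000000

variable {n : ℕ}

lemma aux_isometry (ω : EuclideanSpace ℝ (Fin n)) (p : ℝ) :
    Isometry (fun y : (ℝ ∙ ω)ᗮ => p • ω + (y : EuclideanSpace ℝ (Fin n))) := by
  intro a b
  simp [edist_dist, Subtype.dist_eq, dist_add_left]

lemma aux_closedEmb (ω : EuclideanSpace ℝ (Fin n)) (p : ℝ) :
    Topology.IsClosedEmbedding (fun y : (ℝ ∙ ω)ᗮ => p • ω + (y : EuclideanSpace ℝ (Fin n))) :=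
  (aux_isometry ω p).isClosedEmbedding

lemma aux_integrable (ω : EuclideanSpace ℝ (Fin n)) (p : ℝ)
    {g : EuclideanSpace ℝ (Fin n) → ℝ} (hg : Continuous g) (h : HasCompactSupport g) :
    Integrable (fun y : (ℝ ∙ ω)ᗮ => g (p • ω + (y : EuclideanSpace ℝ (Fin n)))) := by
  have hcs : HasCompactSupport (fun y : (ℝ ∙ ω)ᗮ => g (p • ω + (y : EuclideanSpace ℝ (Fin n)))) :=
    h.comp_isClosedEmbedding (aux_closedEmb ω p)
  exact (hg.comp (continuous_const.add continuous_subtype_val)).integrable_of_hasCompactSupport hcs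

lemma aux_fderiv_comp (ω : EuclideanSpace ℝ (Fin n)) (p : ℝ)
    {g : EuclideanSpace ℝ (Fin n) → ℝ} (hg : ContDiff ℝ (⊤ : ℕ∞) g) (y : (ℝ ∙ ω)ᗮ) :
    fderiv ℝ (fun z : (ℝ ∙ ω)ᗮ => g (p • ω + (z : EuclideanSpace ℝ (Fin n)))) y
      = (fderiv ℝ g (p • ω + (y : EuclideanSpace ℝ (Fin n)))).comp
          (Submodule.subtypeL (ℝ ∙ ω)ᗮ) := by
  have hA : HasFDerivAt (fun z : (ℝ ∙ ω)ᗮ => p • ω + (z : EuclideanSpace ℝ (Fin n)))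
      (Submodule.subtypeL (ℝ ∙ ω)ᗮ) y :=
    (Submodule.subtypeL (ℝ ∙ ω)ᗮ).hasFDerivAt.const_add _
  exact ((hg.differentiable (by simp) _).hasFDerivAt.comp y hA).fderiv

lemma aux_integral_fderiv_zero (ω : EuclideanSpace ℝ (Fin n)) (p : ℝ)
    {g : EuclideanSpace ℝ (Fin n) → ℝ} (hg : ContDiff ℝ (⊤ : ℕ∞) g) (hs : HasCompactSupport g)
    (v : (ℝ ∙ ω)ᗮ) :
    ∫ y : (ℝ ∙ ω)ᗮ, fderiv ℝ g (p • ω + (y : EuclideanSpace ℝ (Fin n)))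
        (v : EuclideanSpace ℝ (Fin n)) = 0 := by
  set F : (ℝ ∙ ω)ᗮ → ℝ := fun z => g (p • ω + (z : EuclideanSpace ℝ (Fin n))) with hF
  have hFc : ContDiff ℝ (⊤ : ℕ∞) F :=
    hg.comp (contDiff_const.add (Submodule.subtypeL (ℝ ∙ ω)ᗮ).contDiff)
  have hFs : HasCompactSupport F := hs.comp_isClosedEmbedding (aux_closedEmb ω p)
  have hFd : ∀ y : (ℝ ∙ ω)ᗮ, fderiv ℝ g (p • ω + (y : EuclideanSpace ℝ (Fin n)))
      (v : EuclideanSpace ℝ (Fin n)) = fderiv ℝ F y v := by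
    intro y; rw [aux_fderiv_comp ω p hg y]; rfl
  -- choose a bump function equal to 1 on a ball containing the support
  obtain ⟨R, hR0, hRs⟩ : ∃ R, 0 < R ∧ tsupport F ⊆ ball 0 R := by
    obtain ⟨R, hR, hR'⟩ := hFs.isCompact.isBounded.subset_ball_lt 0 0
    exact ⟨R, hR, hR'⟩
  obtain ⟨φ, hrIn⟩ : ∃ φ : ContDiffBump (0 : (ℝ ∙ ω)ᗮ), φ.rIn = R :=
    ⟨⟨R, 2 * R, hR0, by linarith⟩, rfl⟩
  have hφ1 : ∀ z ∈ ball (0 : (ℝ ∙ ω)ᗮ) R, φ z = 1 := fun z hz =>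
    φ.one_of_mem_closedBall (by rw [hrIn]; exact ball_subset_closedBall hz)
  have h1 : (fun y => φ y * fderiv ℝ F y v) = fun y => fderiv ℝ F y v := by
    funext y
    by_cases hy : y ∈ tsupport F
    · rw [hφ1 y (hRs hy), one_mul]
    · have : fderiv ℝ F y = 0 := by
        have := support_fderiv_subset (𝕜 := ℝ) (f := F)
        by_contra h
        exact hy (this (by simpa using h))
      simp [this]
  have h2 : (fun y => fderiv ℝ φ y v * F y) = fun _ => (0 : ℝ) := by
    funext y
    by_cases hy : y ∈ ball (0 : (ℝ ∙ ω)ᗮ) R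
    · have : fderiv ℝ (⇑φ) y = 0 := by
        have heq : (⇑φ) =ᶠ[nhds y] fun _ => (1 : ℝ) :=
          Filter.eventuallyEq_of_mem (isOpen_ball.mem_nhds hy) (fun z hz => hφ1 z hz)
        rw [heq.fderiv_eq]; exact fderiv_const_apply _
      simp [this]
    · have : F y = 0 := by
        by_contra h
        exact hy (hRs (subset_tsupport F (by simpa using h)))
      simp [this]
  have hcF : Continuous fun y => fderiv ℝ F y v :=
    (hFc.continuous_fderiv (by simp)).clm_apply continuous_const
  have hsF : HasCompactSupport fun y => fderiv ℝ F y v := by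
    apply HasCompactSupport.intro hFs.isCompact
    intro y hy
    have : fderiv ℝ F y = 0 := by
      by_contra h
      exact hy (support_fderiv_subset (𝕜 := ℝ) (by simpa using h))
    simp [this]
  have hint1 : Integrable (fun y => φ y * fderiv ℝ F y v) := by
    rw [h1]; exact hcF.integrable_of_hasCompactSupport hsF
  have hint2 : Integrable (fun y => fderiv ℝ φ y v * F y) := by
    rw [h2]; exact integrable_zero _ _ _
  have hint3 : Integrable (fun y => φ y * F y) :=
    (φ.continuous.mul hFc.continuous).integrable_of_hasCompactSupport
      (hFs.mul_left)
  have hzero : ∫ y : (ℝ ∙ ω)ᗮ, fderiv ℝ F y v = 0 :=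
    calc ∫ y : (ℝ ∙ ω)ᗮ, fderiv ℝ F y v = ∫ y : (ℝ ∙ ω)ᗮ, φ y * fderiv ℝ F y v := by rw [h1]
    _ = - ∫ y : (ℝ ∙ ω)ᗮ, fderiv ℝ (⇑φ) y v * F y :=
        integral_mul_fderiv_eq_neg_fderiv_mul_of_integrable hint2 hint1 hint3
          (fun x _ => (φ.contDiff (n := (⊤ : ℕ∞))).differentiable (by simp) x)
          (fun x _ => hFc.differentiable (by simp) x)
    _ = 0 := by rw [h2]; simp
  rw [← hzero]
  exact integral_congr_ae (Filter.Eventually.of_forall fun y => hFd y)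

lemma aux_hcs_sum {ι : Type*} {α : Type*} [TopologicalSpace α] [T2Space α] (s : Finset ι)
    (g : ι → α → ℝ) (h : ∀ i ∈ s, HasCompactSupport (g i)) :
    HasCompactSupport fun x => ∑ i ∈ s, g i x := by
  induction s using Finset.cons_induction with
  | empty =>
      simp only [Finset.sum_empty]
      exact HasCompactSupport.intro isCompact_empty (by simp)
  | cons i s hi ih =>
      simp only [Finset.sum_cons]
      exact (h i (Finset.mem_cons_self i s)).add
        (ih fun j hj => h j (Finset.mem_cons_of_mem hj))

lemma aux_sv_cont {f : Fin n → EuclideanSpace ℝ (Fin n) → ℝ}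
    (hf : ∀ i, ContDiff ℝ (⊤ : ℕ∞) (f i)) (i j : Fin n) : Continuous (saintVenant f i j) := by
  unfold saintVenant
  exact continuous_const.mul
    ((((hf i).continuous_fderiv (by simp)).clm_apply continuous_const).sub
      (((hf j).continuous_fderiv (by simp)).clm_apply continuous_const))

lemma aux_sv_hcs {f : Fin n → EuclideanSpace ℝ (Fin n) → ℝ}
    (hsupp : ∀ i, HasCompactSupport (f i)) (i j : Fin n) :
    HasCompactSupport (saintVenant f i j) := by
  unfold saintVenant
  have h1 := HasCompactSupport.fderiv_apply (𝕜 := ℝ) (hsupp i) (EuclideanSpace.single j 1)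
  have h2 := HasCompactSupport.fderiv_apply (𝕜 := ℝ) (hsupp j) (EuclideanSpace.single i 1)
  have h3 : HasCompactSupport fun x =>
      fderiv ℝ (f i) x (EuclideanSpace.single j 1) -
        fderiv ℝ (f j) x (EuclideanSpace.single i 1) := by
    refine (h1.add (h2.comp_left (g := fun t : ℝ => -t) neg_zero)).mono ?_
    intro x hx; simpa [sub_eq_add_neg] using hx
  exact h3.mul_left

lemma aux_T_cont {f : Fin n → EuclideanSpace ℝ (Fin n) → ℝ}
    (hf : ∀ i, ContDiff ℝ (⊤ : ℕ∞) (f i)) (a b : EuclideanSpace ℝ (Fin n)) :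
    Continuous fun x => ∑ i, ∑ j, saintVenant f i j x * a i * b j := by
  refine continuous_finset_sum _ fun i _ => continuous_finset_sum _ fun j _ => ?_
  exact ((aux_sv_cont hf i j).mul continuous_const).mul continuous_const

lemma aux_T_hcs {f : Fin n → EuclideanSpace ℝ (Fin n) → ℝ}
    (hsupp : ∀ i, HasCompactSupport (f i)) (a b : EuclideanSpace ℝ (Fin n)) :
    HasCompactSupport fun x => ∑ i, ∑ j, saintVenant f i j x * a i * b j := by
  refine aux_hcs_sum _ _ fun i _ => aux_hcs_sum _ _ fun j _ => ?_
  exact ((aux_sv_hcs hsupp i j).mul_right).mul_right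

lemma aux_expand (h : EuclideanSpace ℝ (Fin n) → ℝ) (x w : EuclideanSpace ℝ (Fin n)) :
    fderiv ℝ h x w = ∑ j, w j * fderiv ℝ h x (EuclideanSpace.single j 1) := by
  have hw : w = ∑ j, w j • EuclideanSpace.single j (1 : ℝ) := by
    ext i
    rw [WithLp.ofLp_sum, Finset.sum_apply]
    simp [EuclideanSpace.single_apply, PiLp.smul_apply]
  conv_lhs => rw [hw]
  rw [map_sum]
  simp [smul_eq_mul]

lemma aux_pointwise (f : Fin n → EuclideanSpace ℝ (Fin n) → ℝ)
    (u v x : EuclideanSpace ℝ (Fin n)) :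
    ∑ i, ∑ j, saintVenant f i j x * u i * v j
      = (1 / 2) * ((∑ i, u i * fderiv ℝ (f i) x v) - ∑ j, v j * fderiv ℝ (f j) x u) := by
  have h1 : ∀ i : Fin n, u i * fderiv ℝ (f i) x v
      = ∑ j, u i * (v j * fderiv ℝ (f i) x (EuclideanSpace.single j 1)) := by
    intro i; rw [aux_expand (f i) x v, Finset.mul_sum]
  have h2 : ∀ j : Fin n, v j * fderiv ℝ (f j) x u
      = ∑ i, v j * (u i * fderiv ℝ (f j) x (EuclideanSpace.single i 1)) := by
    intro j; rw [aux_expand (f j) x u, Finset.mul_sum]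
  simp only [h1, h2]
  rw [Finset.sum_comm (s := (Finset.univ : Finset (Fin n)))
      (t := (Finset.univ : Finset (Fin n)))
      (f := fun j i => v j * (u i * fderiv ℝ (f j) x (EuclideanSpace.single i 1)))]
  rw [← Finset.sum_sub_distrib, Finset.mul_sum]
  refine Finset.sum_congr rfl fun i _ => ?_
  rw [← Finset.sum_sub_distrib, Finset.mul_sum]
  refine Finset.sum_congr rfl fun j _ => ?_
  unfold saintVenant
  ring

lemma aux_radon_zero {f : Fin n → EuclideanSpace ℝ (Fin n) → ℝ}
    (hf : ∀ i, ContDiff ℝ (⊤ : ℕ∞) (f i)) (hsupp : ∀ i, HasCompactSupport (f i))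
    (ω : EuclideanSpace ℝ (Fin n)) (p : ℝ) (u v : EuclideanSpace ℝ (Fin n))
    (hu : u ∈ (ℝ ∙ ω)ᗮ) (hv : v ∈ (ℝ ∙ ω)ᗮ) :
    radon (fun x => ∑ i, ∑ j, saintVenant f i j x * u i * v j) ω p = 0 := by
  unfold radon
  have hintw : ∀ (i : Fin n) (w : EuclideanSpace ℝ (Fin n)),
      Integrable (fun y : (ℝ ∙ ω)ᗮ =>
        fderiv ℝ (f i) (p • ω + (y : EuclideanSpace ℝ (Fin n))) w) := by
    intro i w
    exact aux_integrable ω p (((hf i).continuous_fderiv (by simp)).clm_apply continuous_const)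
      (HasCompactSupport.fderiv_apply (𝕜 := ℝ) (hsupp i) w)
  have hterm : ∀ (i : Fin n) (w : EuclideanSpace ℝ (Fin n)) (hw : w ∈ (ℝ ∙ ω)ᗮ),
      ∫ y : (ℝ ∙ ω)ᗮ, fderiv ℝ (f i) (p • ω + (y : EuclideanSpace ℝ (Fin n))) w = 0 :=
    fun i w hw => aux_integral_fderiv_zero ω p (hf i) (hsupp i) ⟨w, hw⟩
  have key : ∀ (w z : EuclideanSpace ℝ (Fin n)) (hz : z ∈ (ℝ ∙ ω)ᗮ),
      ∫ y : (ℝ ∙ ω)ᗮ, ∑ i, w i * fderiv ℝ (f i) (p • ω + (y : EuclideanSpace ℝ (Fin n))) z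
        = 0 := by
    intro w z hz
    rw [integral_finset_sum _ fun i _ => (hintw i z).const_mul (w i)]
    simp only [integral_const_mul]
    simp [hterm _ z hz]
  have hint1 : Integrable (fun y : (ℝ ∙ ω)ᗮ =>
      ∑ i, u i * fderiv ℝ (f i) (p • ω + (y : EuclideanSpace ℝ (Fin n))) v) :=
    integrable_finset_sum _ fun i _ => (hintw i v).const_mul (u i)
  have hint2 : Integrable (fun y : (ℝ ∙ ω)ᗮ =>
      ∑ j, v j * fderiv ℝ (f j) (p • ω + (y : EuclideanSpace ℝ (Fin n))) u) :=
    integrable_finset_sum _ fun j _ => (hintw j u).const_mul (v j)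
  calc ∫ y : (ℝ ∙ ω)ᗮ, ∑ i, ∑ j,
          saintVenant f i j (p • ω + (y : EuclideanSpace ℝ (Fin n))) * u i * v j
      = ∫ y : (ℝ ∙ ω)ᗮ, (1 / 2) *
          ((∑ i, u i * fderiv ℝ (f i) (p • ω + (y : EuclideanSpace ℝ (Fin n))) v) -
            ∑ j, v j * fderiv ℝ (f j) (p • ω + (y : EuclideanSpace ℝ (Fin n))) u) :=
        integral_congr_ae (Filter.Eventually.of_forall fun y => aux_pointwise f u v _)
    _ = (1 / 2) * ((∫ y : (ℝ ∙ ω)ᗮ,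
          ∑ i, u i * fderiv ℝ (f i) (p • ω + (y : EuclideanSpace ℝ (Fin n))) v) -
          ∫ y : (ℝ ∙ ω)ᗮ,
            ∑ j, v j * fderiv ℝ (f j) (p • ω + (y : EuclideanSpace ℝ (Fin n))) u) := by
        rw [integral_const_mul, integral_sub hint1 hint2]
    _ = 0 := by rw [key u v hv, key v u hu]; ring

lemma aux_decomp (f : Fin n → EuclideanSpace ℝ (Fin n) → ℝ)
    (ω ξ η : EuclideanSpace ℝ (Fin n)) (x : EuclideanSpace ℝ (Fin n)) :
    ∑ i, ∑ j, saintVenant f i j x * ξ i * η j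
      = (∑ i, ∑ j, saintVenant f i j x * (ξ - ⟪ξ, ω⟫ • ω) i * (η - ⟪η, ω⟫ • ω) j)
        + ⟪η, ω⟫ * ∑ i, ∑ j, saintVenant f i j x * (ξ - ⟪ξ, ω⟫ • ω) i * ω j
        - ⟪ξ, ω⟫ * ∑ i, ∑ j, saintVenant f i j x * (η - ⟪η, ω⟫ • ω) i * ω j := by
  have hcoord : ∀ (a : EuclideanSpace ℝ (Fin n)) (c : ℝ) (b : EuclideanSpace ℝ (Fin n)),
      (∑ i, (a - c • ω) i * fderiv ℝ (f i) x b)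
        = (∑ i, a i * fderiv ℝ (f i) x b) - c * ∑ i, ω i * fderiv ℝ (f i) x b := by
    intro a c b
    rw [Finset.mul_sum, ← Finset.sum_sub_distrib]
    refine Finset.sum_congr rfl fun i _ => ?_
    rw [PiLp.sub_apply, PiLp.smul_apply, smul_eq_mul]
    ring
  have hdir : ∀ (a : EuclideanSpace ℝ (Fin n)) (b : EuclideanSpace ℝ (Fin n)) (c : ℝ),
      (∑ i, a i * fderiv ℝ (f i) x (b - c • ω))
        = (∑ i, a i * fderiv ℝ (f i) x b) - c * ∑ i, a i * fderiv ℝ (f i) x ω := by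
    intro a b c
    rw [Finset.mul_sum, ← Finset.sum_sub_distrib]
    refine Finset.sum_congr rfl fun i _ => ?_
    rw [map_sub, _root_.map_smul, smul_eq_mul]
    ring
  rw [aux_pointwise f ξ η x, aux_pointwise f (ξ - ⟪ξ, ω⟫ • ω) (η - ⟪η, ω⟫ • ω) x,
    aux_pointwise f (ξ - ⟪ξ, ω⟫ • ω) ω x, aux_pointwise f (η - ⟪η, ω⟫ • ω) ω x]
  simp only [hcoord, hdir]
  ring

/-- Decomposition of the Radon transform of ⟨Wf, ξ⊗η⟩ into tangential-normal parts:
with ξ₁ = ξ - ⟪ξ,ω⟫ω and η₁ = η - ⟪η,ω⟫ω. -/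
theorem radon_saintVenant_decomposition {n : ℕ}
    (f : Fin n → EuclideanSpace ℝ (Fin n) → ℝ)
    (hf : ∀ i, ContDiff ℝ (⊤ : ℕ∞) (f i)) (hsupp : ∀ i, HasCompactSupport (f i))
    (ω ξ η : EuclideanSpace ℝ (Fin n)) (hω : ‖ω‖ = 1) (p : ℝ) :
    radon (fun x => ∑ i, ∑ j, saintVenant f i j x * ξ i * η j) ω p =
      ⟪η, ω⟫ *
        radon (fun x => ∑ i, ∑ j, saintVenant f i j x * (ξ - ⟪ξ, ω⟫ • ω) i * ω j) ω p -
      ⟪ξ, ω⟫ *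
        radon (fun x => ∑ i, ∑ j, saintVenant f i j x * (η - ⟪η, ω⟫ • ω) i * ω j) ω p := by
  have hmem : ∀ ζ : EuclideanSpace ℝ (Fin n), ζ - ⟪ζ, ω⟫ • ω ∈ (ℝ ∙ ω)ᗮ := by
    intro ζ
    rw [Submodule.mem_orthogonal_singleton_iff_inner_right]
    rw [inner_sub_right, real_inner_smul_right, real_inner_self_eq_norm_mul_norm, hω]
    rw [real_inner_comm]
    ring
  have hintT : ∀ a b : EuclideanSpace ℝ (Fin n),
      Integrable (fun y : (ℝ ∙ ω)ᗮ =>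
        ∑ i, ∑ j, saintVenant f i j (p • ω + (y : EuclideanSpace ℝ (Fin n))) * a i * b j) :=
    fun a b => aux_integrable ω p (aux_T_cont hf a b) (aux_T_hcs hsupp a b)
  have key : radon (fun x => ∑ i, ∑ j, saintVenant f i j x * ξ i * η j) ω p =
      radon (fun x => ∑ i, ∑ j,
          saintVenant f i j x * (ξ - ⟪ξ, ω⟫ • ω) i * (η - ⟪η, ω⟫ • ω) j) ω p +
        ⟪η, ω⟫ * radon (fun x => ∑ i, ∑ j,
          saintVenant f i j x * (ξ - ⟪ξ, ω⟫ • ω) i * ω j) ω p -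
        ⟪ξ, ω⟫ * radon (fun x => ∑ i, ∑ j,
          saintVenant f i j x * (η - ⟪η, ω⟫ • ω) i * ω j) ω p := by
    unfold radon
    rw [integral_congr_ae (Filter.Eventually.of_forall fun y : (ℝ ∙ ω)ᗮ =>
      aux_decomp f ω ξ η (p • ω + (y : EuclideanSpace ℝ (Fin n))))]
    have h1 : Integrable (fun y : (ℝ ∙ ω)ᗮ =>
        (∑ i, ∑ j, saintVenant f i j (p • ω + (y : EuclideanSpace ℝ (Fin n))) *
            (ξ - ⟪ξ, ω⟫ • ω) i * (η - ⟪η, ω⟫ • ω) j) +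
          ⟪η, ω⟫ * ∑ i, ∑ j, saintVenant f i j (p • ω + (y : EuclideanSpace ℝ (Fin n))) *
            (ξ - ⟪ξ, ω⟫ • ω) i * ω j) :=
      (hintT _ _).add ((hintT _ _).const_mul _)
    have h2 : Integrable (fun y : (ℝ ∙ ω)ᗮ =>
        ⟪ξ, ω⟫ * ∑ i, ∑ j, saintVenant f i j (p • ω + (y : EuclideanSpace ℝ (Fin n))) *
          (η - ⟪η, ω⟫ • ω) i * ω j) :=
      (hintT _ _).const_mul _
    have h3 : Integrable (fun y : (ℝ ∙ ω)ᗮ =>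
        ∑ i, ∑ j, saintVenant f i j (p • ω + (y : EuclideanSpace ℝ (Fin n))) *
          (ξ - ⟪ξ, ω⟫ • ω) i * (η - ⟪η, ω⟫ • ω) j) := hintT _ _
    have h4 : Integrable (fun y : (ℝ ∙ ω)ᗮ =>
        ⟪η, ω⟫ * ∑ i, ∑ j, saintVenant f i j (p • ω + (y : EuclideanSpace ℝ (Fin n))) *
          (ξ - ⟪ξ, ω⟫ • ω) i * ω j) := (hintT _ _).const_mul _
    rw [integral_sub h1 h2, integral_add h3 h4, integral_const_mul, integral_const_mul]
  rw [key, aux_radon_zero hf hsupp ω p _ _ (hmem ξ) (hmem η)]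
  ring
end

section
/- Let Ω = B(0,r) ⊂ R^3 be the open ball of radius r and let γ be the union of the three great circles of the sphere S(0,R) lying in the coordinate planes, with R > √3 r. Then every plane (affine 2-dimensional hyperplane) in R^3 that intersects Ω intersects γ in at least 3 points that are not collinear. -/
open Metric
open scoped RealInnerProductSpace

private lemma sum3' (i j m : Fin 3) (hij : i ≠ j) (him : i ≠ m) (hjm : j ≠ m) (f : Fin 3 → ℝ) :
    ∑ k, f k = f i + f j + f m := by
  fin_cases i <;> fin_cases j <;> fin_cases m <;> simp_all [Fin.sum_univ_three] <;> ring

private lemma not_collinear_aux (a b c d : EuclideanSpace ℝ (Fin 3)) (i : Fin 3)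
    (hba : b i = a i) (hne : b ≠ a) (hcd : c i ≠ d i)
    (h1 : Collinear ℝ {a, b, c}) (h2 : Collinear ℝ {a, b, d}) : False := by
  obtain ⟨v, hv⟩ := (collinear_iff_of_mem (show a ∈ ({a, b, c} : Set _) by simp)).1 h1
  obtain ⟨w, hw⟩ := (collinear_iff_of_mem (show a ∈ ({a, b, d} : Set _) by simp)).1 h2
  obtain ⟨rb, hrb⟩ := hv b (by simp)
  obtain ⟨rc, hrc⟩ := hv c (by simp)
  obtain ⟨sb, hsb⟩ := hw b (by simp)
  obtain ⟨sd, hsd⟩ := hw d (by simp)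
  have hrb0 : rb ≠ 0 := by rintro rfl; simp at hrb; exact hne hrb
  have hsb0 : sb ≠ 0 := by rintro rfl; simp at hsb; exact hne hsb
  have hvi : v i = 0 := by
    have : b i = rb * v i + a i := by rw [hrb]; simp
    have := hba.symm.trans this
    have : rb * v i = 0 := by linarith
    exact (mul_eq_zero.1 this).resolve_left hrb0
  have hwi : w i = 0 := by
    have : b i = sb * w i + a i := by rw [hsb]; simp
    have := hba.symm.trans this
    have : sb * w i = 0 := by linarith
    exact (mul_eq_zero.1 this).resolve_left hsb0
  have hci : c i = a i := by rw [hrc]; simp [hvi]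
  have hdi : d i = a i := by rw [hsd]; simp [hwi]
  exact hcd (hci.trans hdi.symm)

private lemma key_lemma (R p : ℝ) (hR0 : 0 < R) (hp : p ^ 2 < R ^ 2 / 3)
    (ω : EuclideanSpace ℝ (Fin 3)) (i j m : Fin 3)
    (hij : i ≠ j) (him : i ≠ m) (hjm : j ≠ m)
    (hsum : ω i ^ 2 + ω j ^ 2 + ω m ^ 2 = 1) (hm : 1 / 3 ≤ ω m ^ 2) :
    ∃ a b c : EuclideanSpace ℝ (Fin 3),
      (‖a‖ = R ∧ a i = 0) ∧ (‖b‖ = R ∧ b i = 0) ∧ (‖c‖ = R ∧ c j = 0) ∧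
      ⟪ω, a⟫ = p ∧ ⟪ω, b⟫ = p ∧ ⟪ω, c⟫ = p ∧
      ¬ Collinear ℝ ({a, b, c} : Set (EuclideanSpace ℝ (Fin 3))) := by
  have hm0 : ω m ≠ 0 := by
    intro h; rw [h] at hm; norm_num at hm
  have hnorm : ∀ x : EuclideanSpace ℝ (Fin 3), ‖x‖ = Real.sqrt (∑ k, (x k) ^ 2) := by
    intro x
    rw [EuclideanSpace.norm_eq]
    congr 1; apply Finset.sum_congr rfl; intro k _; rw [Real.norm_eq_abs, sq_abs]
  have hinner : ∀ x : EuclideanSpace ℝ (Fin 3), ⟪ω, x⟫ = ∑ k, ω k * x k := by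
    intro x; simp [PiLp.inner_apply, RCLike.inner_apply, conj_trivial]
    exact Finset.sum_congr rfl fun k _ => mul_comm _ _
  -- the two squared "in-plane" norms of ω
  set s₁ : ℝ := ω j ^ 2 + ω m ^ 2 with hs₁def
  set s₂ : ℝ := ω i ^ 2 + ω m ^ 2 with hs₂def
  have hs₁ : 1 / 3 ≤ s₁ := by nlinarith [sq_nonneg (ω j)]
  have hs₂ : 1 / 3 ≤ s₂ := by nlinarith [sq_nonneg (ω i)]
  have hs₁0 : 0 < s₁ := by linarith
  have hs₂0 : 0 < s₂ := by linarith
  have hs₁le : s₁ ≤ 1 := by nlinarith [sq_nonneg (ω i)]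
  have hs₂le : s₂ ≤ 1 := by nlinarith [sq_nonneg (ω j)]
  have hd₁ : 0 < s₁ * R ^ 2 - p ^ 2 := by nlinarith
  have hd₂ : 0 < s₂ * R ^ 2 - p ^ 2 := by nlinarith
  set q₁ : ℝ := p / s₁ with hq₁def
  set q₂ : ℝ := p / s₂ with hq₂def
  set t₁ : ℝ := Real.sqrt (s₁ * R ^ 2 - p ^ 2) / s₁ with ht₁def
  set t₂ : ℝ := Real.sqrt (s₂ * R ^ 2 - p ^ 2) / s₂ with ht₂def
  have ht₁0 : 0 < t₁ := div_pos (Real.sqrt_pos.2 hd₁) hs₁0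
  have ht₂0 : 0 < t₂ := div_pos (Real.sqrt_pos.2 hd₂) hs₂0
  have ht₁sq : t₁ ^ 2 = (s₁ * R ^ 2 - p ^ 2) / s₁ ^ 2 := by
    rw [ht₁def, div_pow, Real.sq_sqrt hd₁.le]
  have ht₂sq : t₂ ^ 2 = (s₂ * R ^ 2 - p ^ 2) / s₂ ^ 2 := by
    rw [ht₂def, div_pow, Real.sq_sqrt hd₂.le]
  -- points on the circle in the plane x_i = 0
  let mk₁ : ℝ → EuclideanSpace ℝ (Fin 3) := fun ε =>
    WithLp.toLp 2 (fun k => if k = j then q₁ * ω j - ε * t₁ * ω m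
      else if k = m then q₁ * ω m + ε * t₁ * ω j else 0)
  -- points on the circle in the plane x_j = 0
  let mk₂ : ℝ → EuclideanSpace ℝ (Fin 3) := fun ε =>
    WithLp.toLp 2 (fun k => if k = i then q₂ * ω i - ε * t₂ * ω m
      else if k = m then q₂ * ω m + ε * t₂ * ω i else 0)
  have hmk₁i : ∀ ε, mk₁ ε i = 0 := by intro ε; simp [mk₁, hij, him]
  have hmk₁j : ∀ ε, mk₁ ε j = q₁ * ω j - ε * t₁ * ω m := by intro ε; simp [mk₁]
  have hmk₁m : ∀ ε, mk₁ ε m = q₁ * ω m + ε * t₁ * ω j := by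
    intro ε; simp [mk₁, hjm.symm]
  have hmk₂j : ∀ ε, mk₂ ε j = 0 := by intro ε; simp [mk₂, hij.symm, hjm]
  have hmk₂i : ∀ ε, mk₂ ε i = q₂ * ω i - ε * t₂ * ω m := by intro ε; simp [mk₂]
  have hmk₂m : ∀ ε, mk₂ ε m = q₂ * ω m + ε * t₂ * ω i := by
    intro ε; simp [mk₂, him.symm]
  have hnorm₁ : ∀ ε : ℝ, ε ^ 2 = 1 → ‖mk₁ ε‖ = R := by
    intro ε hε
    rw [hnorm, sum3' i j m hij him hjm, hmk₁i, hmk₁j, hmk₁m]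
    have : (0:ℝ) ^ 2 + (q₁ * ω j - ε * t₁ * ω m) ^ 2 + (q₁ * ω m + ε * t₁ * ω j) ^ 2
        = (q₁ ^ 2 + ε ^ 2 * t₁ ^ 2) * s₁ := by rw [hs₁def]; ring
    rw [this, hε, one_mul]
    have : (q₁ ^ 2 + t₁ ^ 2) * s₁ = R ^ 2 := by
      rw [hq₁def, ht₁sq]; field_simp; ring
    rw [this, Real.sqrt_sq hR0.le]
  have hnorm₂ : ∀ ε : ℝ, ε ^ 2 = 1 → ‖mk₂ ε‖ = R := by
    intro ε hε
    rw [hnorm, sum3' j i m hij.symm hjm him, hmk₂j, hmk₂i, hmk₂m]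
    have : (0:ℝ) ^ 2 + (q₂ * ω i - ε * t₂ * ω m) ^ 2 + (q₂ * ω m + ε * t₂ * ω i) ^ 2
        = (q₂ ^ 2 + ε ^ 2 * t₂ ^ 2) * s₂ := by rw [hs₂def]; ring
    rw [this, hε, one_mul]
    have : (q₂ ^ 2 + t₂ ^ 2) * s₂ = R ^ 2 := by
      rw [hq₂def, ht₂sq]; field_simp; ring
    rw [this, Real.sqrt_sq hR0.le]
  have hinner₁ : ∀ ε : ℝ, ⟪ω, mk₁ ε⟫ = p := by
    intro ε
    rw [hinner, sum3' i j m hij him hjm, hmk₁i, hmk₁j, hmk₁m]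
    have : ω i * 0 + ω j * (q₁ * ω j - ε * t₁ * ω m) + ω m * (q₁ * ω m + ε * t₁ * ω j)
        = q₁ * s₁ := by rw [hs₁def]; ring
    rw [this, hq₁def, div_mul_cancel₀ _ hs₁0.ne']
  have hinner₂ : ∀ ε : ℝ, ⟪ω, mk₂ ε⟫ = p := by
    intro ε
    rw [hinner, sum3' j i m hij.symm hjm him, hmk₂j, hmk₂i, hmk₂m]
    have : ω j * 0 + ω i * (q₂ * ω i - ε * t₂ * ω m) + ω m * (q₂ * ω m + ε * t₂ * ω i)
        = q₂ * s₂ := by rw [hs₂def]; ring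
    rw [this, hq₂def, div_mul_cancel₀ _ hs₂0.ne']
  have hones : (1:ℝ) ^ 2 = 1 := by norm_num
  have hnegones : (-1:ℝ) ^ 2 = 1 := by norm_num
  have hbai : mk₁ (-1) i = mk₁ 1 i := by rw [hmk₁i, hmk₁i]
  have hbne : mk₁ (-1) ≠ mk₁ 1 := by
    intro h
    have h' : mk₁ (-1) j = mk₁ 1 j := congrArg (fun y : EuclideanSpace ℝ (Fin 3) => y j) h
    rw [hmk₁j, hmk₁j] at h'
    have : t₁ * ω m = 0 := by linarith
    rcases mul_eq_zero.1 this with h'' | h''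
    · exact ht₁0.ne' h''
    · exact hm0 h''
  have hcdi : mk₂ 1 i ≠ mk₂ (-1) i := by
    rw [hmk₂i, hmk₂i]
    intro h
    have : t₂ * ω m = 0 := by linarith
    rcases mul_eq_zero.1 this with h'' | h''
    · exact ht₂0.ne' h''
    · exact hm0 h''
  set a := mk₁ 1
  set b := mk₁ (-1)
  set c := mk₂ 1
  set d := mk₂ (-1)
  by_cases hcol : Collinear ℝ ({a, b, c} : Set (EuclideanSpace ℝ (Fin 3)))
  · refine ⟨a, b, d, ⟨hnorm₁ 1 hones, hmk₁i 1⟩, ⟨hnorm₁ (-1) hnegones, hmk₁i (-1)⟩,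
      ⟨hnorm₂ (-1) hnegones, hmk₂j (-1)⟩, hinner₁ 1, hinner₁ (-1), hinner₂ (-1), ?_⟩
    intro hcol'
    exact not_collinear_aux a b c d i hbai hbne hcdi hcol hcol'
  · exact ⟨a, b, c, ⟨hnorm₁ 1 hones, hmk₁i 1⟩, ⟨hnorm₁ (-1) hnegones, hmk₁i (-1)⟩,
      ⟨hnorm₂ 1 hones, hmk₂j 1⟩, hinner₁ 1, hinner₁ (-1), hinner₂ 1, hcol⟩

/-- Three great circles of the sphere of radius `R > √3 r` in the coordinate planes:
every plane meeting the ball `B(0,r)` meets this curve in at least three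
non-collinear points. -/
theorem three_great_circles_encompass (r R : ℝ) (hr : 0 < r)
    (hR : Real.sqrt 3 * r < R)
    (γ : Set (EuclideanSpace ℝ (Fin 3)))
    (hγ : γ = {x | ‖x‖ = R ∧ (x 0 = 0 ∨ x 1 = 0 ∨ x 2 = 0)})
    (ω : EuclideanSpace ℝ (Fin 3)) (hω : ‖ω‖ = 1) (p : ℝ)
    (hmeet : ({x | ⟪ω, x⟫ = p} ∩ ball (0 : EuclideanSpace ℝ (Fin 3)) r).Nonempty) :
    ∃ a b c : EuclideanSpace ℝ (Fin 3),
      a ∈ γ ∧ b ∈ γ ∧ c ∈ γ ∧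
      ⟪ω, a⟫ = p ∧ ⟪ω, b⟫ = p ∧ ⟪ω, c⟫ = p ∧
      ¬ Collinear ℝ ({a, b, c} : Set (EuclideanSpace ℝ (Fin 3))) := by
  have h3 : Real.sqrt 3 ^ 2 = 3 := Real.sq_sqrt (by norm_num)
  have hs3 : (0:ℝ) < Real.sqrt 3 := Real.sqrt_pos.2 (by norm_num)
  have hR0 : 0 < R := lt_trans (by positivity) hR
  -- |p| < r
  obtain ⟨x, hx1, hx2⟩ := hmeet
  have hxr : ‖x‖ < r := by simpa [dist_zero_right] using mem_ball.1 hx2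
  have hpr : |p| < r := by
    calc |p| = |⟪ω, x⟫| := by rw [hx1]
    _ ≤ ‖ω‖ * ‖x‖ := abs_real_inner_le_norm ω x
    _ = ‖x‖ := by rw [hω, one_mul]
    _ < r := hxr
  have hp2 : p ^ 2 < R ^ 2 / 3 := by
    have h1 : p ^ 2 < r ^ 2 := by nlinarith [abs_nonneg p, sq_abs p]
    have h2 : 3 * r ^ 2 < R ^ 2 := by
      have hpos : (0:ℝ) < R + Real.sqrt 3 * r := by positivity
      nlinarith [mul_pos (sub_pos.2 hR) hpos]
    linarith
  -- sum of squares of ω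
  have hsum : ω 0 ^ 2 + ω 1 ^ 2 + ω 2 ^ 2 = 1 := by
    have h1 : ⟪ω, ω⟫ = 1 := by rw [real_inner_self_eq_norm_sq, hω]; norm_num
    have h2 : ⟪ω, ω⟫ = ∑ k, ω k * ω k := by
      rw [PiLp.inner_apply]
      exact Finset.sum_congr rfl fun k _ => by simp [RCLike.inner_apply, conj_trivial, sq]
    rw [h2, Fin.sum_univ_three] at h1
    nlinarith
  have hmem : ∀ y : EuclideanSpace ℝ (Fin 3),
      ‖y‖ = R → (y 0 = 0 ∨ y 1 = 0 ∨ y 2 = 0) → y ∈ γ := by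
    intro y h1 h2; rw [hγ]; exact ⟨h1, h2⟩
  by_cases h0 : 1 / 3 ≤ ω 0 ^ 2
  · obtain ⟨a, b, c, ⟨hna, hai⟩, ⟨hnb, hbi⟩, ⟨hnc, hcj⟩, hia, hib, hic, hcol⟩ :=
      key_lemma R p hR0 hp2 ω 1 2 0 (by decide) (by decide) (by decide) (by linarith) h0
    exact ⟨a, b, c, hmem a hna (Or.inr (Or.inl hai)), hmem b hnb (Or.inr (Or.inl hbi)),
      hmem c hnc (Or.inr (Or.inr hcj)), hia, hib, hic, hcol⟩
  · by_cases h1 : 1 / 3 ≤ ω 1 ^ 2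
    · obtain ⟨a, b, c, ⟨hna, hai⟩, ⟨hnb, hbi⟩, ⟨hnc, hcj⟩, hia, hib, hic, hcol⟩ :=
        key_lemma R p hR0 hp2 ω 0 2 1 (by decide) (by decide) (by decide) (by linarith) h1
      exact ⟨a, b, c, hmem a hna (Or.inl hai), hmem b hnb (Or.inl hbi),
        hmem c hnc (Or.inr (Or.inr hcj)), hia, hib, hic, hcol⟩
    · have h2 : 1 / 3 ≤ ω 2 ^ 2 := by push_neg at h0 h1; linarith
      obtain ⟨a, b, c, ⟨hna, hai⟩, ⟨hnb, hbi⟩, ⟨hnc, hcj⟩, hia, hib, hic, hcol⟩ :=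
        key_lemma R p hR0 hp2 ω 0 1 2 (by decide) (by decide) (by decide) (by linarith) h2
      exact ⟨a, b, c, hmem a hna (Or.inl hai), hmem b hnb (Or.inl hbi),
        hmem c hnc (Or.inr (Or.inl hcj)), hia, hib, hic, hcol⟩
end
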